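/- Consider a 5-path-center configuration in a finite simple graph G with A2 = {i} and A1 = ∅. Then G contains a collection of vertex-disjoint paths, each of order at least 4, covering in total: at least 9 vertices if i ∈ {1,5}; at least 6 vertices if i ∈ {2,4}; and at least 5 vertices if i = 3. -/

import Mathlib

open SimpleGraph

/-- Degree of a vertex in a subgraph, via `Set.ncard` of the neighbor set. -/
noncomputable def subDeg {V : Type*} {G : SimpleGraph V} (H : G.Subgraph) (v : V) : ℕ :=
  (H.neighborSet v).ncard

/-- A subgraph is a path: it is a single vertex, or it is connected with exactly two
vertices of degree 1 and all other vertices of degree 2. -/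
def IsPathSubgraph {V : Type*} {G : SimpleGraph V} (P : G.Subgraph) : Prop :=
  P.Connected ∧
  ((∃ v, P.verts = {v}) ∨
    (({v ∈ P.verts | subDeg P v = 1}).ncard = 2 ∧
      ∀ v ∈ P.verts, subDeg P v = 1 ∨ subDeg P v = 2))

/-- `x` is an endpoint of the path subgraph `P` (for paths of order at least 2). -/
def IsPathEndpoint {V : Type*} {G : SimpleGraph V} (P : G.Subgraph) (x : V) : Prop :=
  x ∈ P.verts ∧ subDeg P x = 1

/-- A matching of `G`: a finite set of edges of `G`, no two of which share an endpoint. -/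
def IsMatchingSet {V : Type*} (G : SimpleGraph V) (M : Finset (Sym2 V)) : Prop :=
  ↑M ⊆ G.edgeSet ∧ ∀ e ∈ M, ∀ f ∈ M, e ≠ f → ∀ v : V, v ∈ e → v ∉ f

/-- A maximum matching of `G`. -/
def IsMaxMatchingSet {V : Type*} (G : SimpleGraph V) (M : Finset (Sym2 V)) : Prop :=
  IsMatchingSet G M ∧ ∀ M' : Finset (Sym2 V), IsMatchingSet G M' → M'.card ≤ M.card

/-- There is a collection of vertex-disjoint path subgraphs of `G`, each of order at
least 4, whose total number of vertices `n` satisfies `p n`. -/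
def HasDisjointPathsCovering {V : Type*} (G : SimpleGraph V) (p : ℕ → Prop) : Prop :=
  ∃ Ps : Set G.Subgraph,
    (∀ P ∈ Ps, IsPathSubgraph P ∧ 4 ≤ P.verts.ncard) ∧
    (Ps.Pairwise fun P Q => Disjoint P.verts Q.verts) ∧
    p ((⋃ P ∈ Ps, P.verts).ncard)

/-- There is a collection of vertex-disjoint path subgraphs of `G`, each of order at
least 4, covering at least `N` vertices in total. -/
def HasDisjointPathCover {V : Type*} (G : SimpleGraph V) (N : ℕ) : Prop :=
  HasDisjointPathsCovering G fun n => N ≤ n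

/-- `opt G`: the maximum total number of vertices in a collection of vertex-disjoint
paths of `G`, each of order at least 4. -/
noncomputable def optValue {V : Type*} (G : SimpleGraph V) : ℕ :=
  sSup {n : ℕ |
    ∃ Ps : Set G.Subgraph,
      (∀ P ∈ Ps, IsPathSubgraph P ∧ 4 ≤ P.verts.ncard) ∧
      (Ps.Pairwise fun P Q => Disjoint P.verts Q.verts) ∧
      n = (⋃ P ∈ Ps, P.verts).ncard}

/-- Degree of a vertex in the spanning subgraph determined by an edge set `F`. -/
noncomputable def edgeDeg {W : Type*} (F : Set (Sym2 W)) (v : W) : ℕ :=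
  {e ∈ F | v ∈ e}.ncard

/-- An edge set `C` saturates a vertex set `B` if some edge of `C` has an endpoint in `B`. -/
def Saturates {W : Type*} (C : Set (Sym2 W)) (B : Set W) : Prop :=
  ∃ e ∈ C, ∃ v ∈ B, v ∈ e

/-- A 5-path-center configuration in `G`: a path `v 0 – v 1 – v 2 – v 3 – v 4` in `G`
(indices `0,…,4` correspond to `v1,…,v5`), disjoint index sets `A1` (1-anchors) and
`A2` (2-anchors), pairwise disjoint sets `U i` avoiding the `v i`'s, for each
`i ∈ A1 ∪ A2` a path `Q i` of order at least 3 with endpoint `v i` and all other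
vertices in `U i`, and for each `i ∈ A2` additionally a path `P i` of order at least 5
with `v i ∈ V(P i) ⊆ {v i} ∪ U i`. -/
structure FivePathConfig {V : Type*} (G : SimpleGraph V) where
  v : Fin 5 → V
  inj : Function.Injective v
  adj : ∀ i : Fin 4, G.Adj (v i.castSucc) (v i.succ)
  A1 : Finset (Fin 5)
  A2 : Finset (Fin 5)
  hA : Disjoint A1 A2
  U : Fin 5 → Set V
  hUv : ∀ i ∈ A1 ∪ A2, Disjoint (U i) (Set.range v)
  hUdisj : ∀ i ∈ A1 ∪ A2, ∀ j ∈ A1 ∪ A2, i ≠ j → Disjoint (U i) (U j)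
  Q : Fin 5 → G.Subgraph
  hQpath : ∀ i ∈ A1 ∪ A2, IsPathSubgraph (Q i)
  hQcard : ∀ i ∈ A1 ∪ A2, 3 ≤ (Q i).verts.ncard
  hQend : ∀ i ∈ A1 ∪ A2, IsPathEndpoint (Q i) (v i)
  hQverts : ∀ i ∈ A1 ∪ A2, (Q i).verts ⊆ insert (v i) (U i)
  P : Fin 5 → G.Subgraph
  hPpath : ∀ i ∈ A2, IsPathSubgraph (P i)
  hPcard : ∀ i ∈ A2, 5 ≤ (P i).verts.ncard
  hPv : ∀ i ∈ A2, v i ∈ (P i).verts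
  hPverts : ∀ i ∈ A2, (P i).verts ⊆ insert (v i) (U i)

/-!
If the 2-anchor is an end of the spine `v1 – … – v5`, the four other spine vertices form a
path of order 4 disjoint from the path `P i` of order at least 5. If it is `v2` or `v4`, the
path `Q i` of order at least 3 ends at the anchor and can be prolonged along the three spine
vertices on the longer side. If it is `v3`, the path `P i` alone suffices.
-/

section

variable {V : Type*} {G : SimpleGraph V}

section Extension

variable {P : G.Subgraph} {x w : V}

lemma isPathEndpoint_subgraphOfAdj_snd (hadj : G.Adj x w) :
    IsPathEndpoint (G.subgraphOfAdj hadj) w :=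
  ⟨by simp, by simp [subDeg]⟩

lemma isPathSubgraph_subgraphOfAdj (hadj : G.Adj x w) :
    IsPathSubgraph (G.subgraphOfAdj hadj) := by
  have hdeg : ∀ u ∈ (G.subgraphOfAdj hadj).verts, subDeg (G.subgraphOfAdj hadj) u = 1 := by
    rintro u (rfl | rfl) <;> simp [subDeg]
  refine ⟨Subgraph.subgraphOfAdj_connected hadj, Or.inr ⟨?_, fun u hu => Or.inl (hdeg u hu)⟩⟩
  rw [Set.sep_eq_self_iff_mem_true.mpr hdeg, subgraphOfAdj_verts, Set.ncard_pair hadj.ne]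

lemma SimpleGraph.Subgraph.verts_sup_subgraphOfAdj (hx : x ∈ P.verts) (hadj : G.Adj x w) :
    (P ⊔ G.subgraphOfAdj hadj).verts = insert w P.verts := by
  rw [Subgraph.verts_sup, subgraphOfAdj_verts, Set.union_insert, Set.union_singleton,
    Set.insert_eq_of_mem (Set.mem_insert_of_mem w hx)]

lemma SimpleGraph.Subgraph.neighborSet_eq_empty_of_notMem (hw : w ∉ P.verts) :
    P.neighborSet w = ∅ :=
  Set.eq_empty_of_forall_notMem fun _ h => hw h.fst_mem

lemma IsPathSubgraph.degrees_of_isPathEndpoint (hP : IsPathSubgraph P)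
    (hx : IsPathEndpoint P x) :
    {v ∈ P.verts | subDeg P v = 1}.ncard = 2 ∧
      ∀ v ∈ P.verts, subDeg P v = 1 ∨ subDeg P v = 2 := by
  refine hP.2.resolve_left ?_
  rintro ⟨v, hv⟩
  obtain ⟨y, hy⟩ := Set.nonempty_of_ncard_ne_zero (hx.2.symm ▸ one_ne_zero : subDeg P x ≠ 0)
  have hxv : x ∈ ({v} : Set V) := hv ▸ hy.fst_mem
  have hyv : y ∈ ({v} : Set V) := hv ▸ hy.snd_mem
  exact hy.ne (hxv.trans hyv.symm)

/-- Appending a new vertex `w` at an endpoint `x` raises the degree of `x` from 1 to 2, gives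
`w` degree 1 and leaves all other degrees unchanged, so the endpoints `{x, y}` become `{w, y}`. -/
lemma IsPathSubgraph.sup_subgraphOfAdj (hP : IsPathSubgraph P) (hx : IsPathEndpoint P x)
    (hw : w ∉ P.verts) (hadj : G.Adj x w) :
    IsPathSubgraph (P ⊔ G.subgraphOfAdj hadj) ∧ IsPathEndpoint (P ⊔ G.subgraphOfAdj hadj) w := by
  set R := P ⊔ G.subgraphOfAdj hadj
  have hverts : R.verts = insert w P.verts := P.verts_sup_subgraphOfAdj hx.1 hadj
  have hdeg_w : subDeg R w = 1 := by
    rw [subDeg, Subgraph.neighborSet_sup, P.neighborSet_eq_empty_of_notMem hw,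
      neighborSet_snd_subgraphOfAdj, Set.empty_union, Set.ncard_singleton]
  have hdeg_x : subDeg R x = 2 := by
    rw [subDeg, Subgraph.neighborSet_sup, neighborSet_fst_subgraphOfAdj,
      Set.union_singleton, Set.ncard_insert_of_notMem (fun h => hw h.snd_mem)
        (Set.finite_of_ncard_pos (by rw [← subDeg, hx.2]; exact one_pos))]
    rw [← subDeg, hx.2]
  have hdeg : ∀ u, u ≠ x → u ≠ w → subDeg R u = subDeg P u := fun u hux huw => by
    rw [subDeg, Subgraph.neighborSet_sup,
      neighborSet_subgraphOfAdj_of_ne_of_ne hadj hux huw, Set.union_empty, subDeg]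
  obtain ⟨hends, hdeg12⟩ := hP.degrees_of_isPathEndpoint hx
  have hends' : {u ∈ R.verts | subDeg R u = 1} =
      insert w ({u ∈ P.verts | subDeg P u = 1} \ {x}) := by
    ext u
    rcases eq_or_ne u w with rfl | huw
    · simp [hverts, hdeg_w]
    rcases eq_or_ne u x with rfl | hux
    · simp [hdeg_x, huw]
    simp [hverts, huw, hux, hdeg u hux huw]
  refine ⟨⟨?_, Or.inr ⟨?_, ?_⟩⟩, hverts ▸ Set.mem_insert w P.verts, hdeg_w⟩
  · exact Subgraph.connected_sup hP.1.preconnected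
      (Subgraph.subgraphOfAdj_connected hadj).preconnected ⟨x, hx.1, by simp⟩
  · have hx_end : x ∈ {u ∈ P.verts | subDeg P u = 1} := hx
    rw [hends', Set.ncard_insert_of_notMem (fun h => hw h.1.1)
      ((Set.finite_of_ncard_pos (by omega)).sdiff), Set.ncard_sdiff_singleton_of_mem hx_end,
      hends]
  · intro u hu
    rcases eq_or_ne u w with rfl | huw
    · exact Or.inl hdeg_w
    rcases eq_or_ne u x with rfl | hux
    · exact Or.inr hdeg_x
    rw [hdeg u hux huw]
    exact hdeg12 u ((hverts ▸ hu).resolve_left huw)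

end Extension

section Chains

lemma IsPathSubgraph.exists_sup_chain {n : ℕ} {P : G.Subgraph} (hP : IsPathSubgraph P)
    {u : Fin (n + 1) → V} (hu : Function.Injective u)
    (hadj : ∀ k : Fin n, G.Adj (u k.castSucc) (u k.succ)) (hx : IsPathEndpoint P (u 0))
    (hout : ∀ k : Fin n, u k.succ ∉ P.verts) :
    ∃ R : G.Subgraph, IsPathSubgraph R ∧ IsPathEndpoint R (u (Fin.last n)) ∧
      R.verts = P.verts ∪ Set.range (Fin.tail u) := by
  induction n generalizing P with
  | zero => exact ⟨P, hP, hx, by simp [Set.range_eq_empty]⟩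
  | succ n ih =>
    obtain ⟨hR, hRend⟩ := hP.sup_subgraphOfAdj hx (hout 0) (hadj 0)
    have hRverts := P.verts_sup_subgraphOfAdj hx.1 (hadj 0)
    obtain ⟨R', hR', hR'end, hR'verts⟩ := ih hR (u := Fin.tail u)
      (hu.comp (Fin.succ_injective _)) (fun k => hadj k.succ) hRend fun k => by
        rw [hRverts, Set.mem_insert_iff, not_or]
        exact ⟨hu.ne (Fin.succ_injective _ |>.ne k.succ_ne_zero), hout k.succ⟩
    refine ⟨R', hR', hR'end, ?_⟩
    rw [hR'verts, hRverts, Fin.range_fin_succ (Fin.tail u), Set.union_insert, Set.insert_union]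
    rfl

lemma exists_isPathSubgraph_verts_eq_range {n : ℕ} {u : Fin (n + 2) → V}
    (hu : Function.Injective u) (hadj : ∀ k : Fin (n + 1), G.Adj (u k.castSucc) (u k.succ)) :
    ∃ R : G.Subgraph, IsPathSubgraph R ∧ R.verts = Set.range u := by
  obtain ⟨R, hR, -, hRverts⟩ := (isPathSubgraph_subgraphOfAdj (hadj 0)).exists_sup_chain
    (u := Fin.tail u) (hu.comp (Fin.succ_injective _)) (fun k => hadj k.succ)
    (isPathEndpoint_subgraphOfAdj_snd (hadj 0)) fun k => by
      rw [subgraphOfAdj_verts, Set.mem_insert_iff, Set.mem_singleton_iff, not_or]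
      exact ⟨hu.ne k.succ.succ_ne_zero, hu.ne (Fin.succ_injective _ |>.ne k.succ_ne_zero)⟩
  refine ⟨R, hR, ?_⟩
  rw [hRverts, subgraphOfAdj_verts, Fin.range_fin_succ u, Fin.range_fin_succ (Fin.tail u),
    Set.insert_union, Set.singleton_union]
  rfl

end Chains

section Covers

lemma HasDisjointPathCover.mono {M N : ℕ} (h : HasDisjointPathCover G N) (hMN : M ≤ N) :
    HasDisjointPathCover G M :=
  let ⟨Ps, hPs, hdisj, hN⟩ := h
  ⟨Ps, hPs, hdisj, hMN.trans hN⟩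

lemma hasDisjointPathCover_of_isPathSubgraph {R : G.Subgraph} (hR : IsPathSubgraph R)
    (h4 : 4 ≤ R.verts.ncard) : HasDisjointPathCover G R.verts.ncard :=
  ⟨{R}, by simpa using ⟨hR, h4⟩, Set.pairwise_singleton _ _, by rw [Set.biUnion_singleton]⟩

lemma hasDisjointPathCover_of_disjoint {A B : G.Subgraph} (hA : IsPathSubgraph A)
    (hB : IsPathSubgraph B) (h4A : 4 ≤ A.verts.ncard) (h4B : 4 ≤ B.verts.ncard)
    (hAB : Disjoint A.verts B.verts) :
    HasDisjointPathCover G (A.verts.ncard + B.verts.ncard) := by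
  refine ⟨{A, B}, ?_, Set.pairwise_pair.mpr fun _ => ⟨hAB, hAB.symm⟩, ?_⟩
  · rintro P (rfl | rfl)
    exacts [⟨hA, h4A⟩, ⟨hB, h4B⟩]
  · rw [Set.biUnion_pair, Set.ncard_union_eq hAB (Set.finite_of_ncard_pos (by omega))
      (Set.finite_of_ncard_pos (by omega))]

lemma hasDisjointPathCover_of_sup_chain {n : ℕ} {P : G.Subgraph} (hP : IsPathSubgraph P)
    (hfin : P.verts.Finite) {u : Fin (n + 1) → V} (hu : Function.Injective u)
    (hadj : ∀ k : Fin n, G.Adj (u k.castSucc) (u k.succ)) (hx : IsPathEndpoint P (u 0))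
    (hout : ∀ k : Fin n, u k.succ ∉ P.verts) (h4 : 4 ≤ P.verts.ncard + n) :
    HasDisjointPathCover G (P.verts.ncard + n) := by
  obtain ⟨R, hR, -, hRverts⟩ := hP.exists_sup_chain hu hadj hx hout
  have hcard : R.verts.ncard = P.verts.ncard + n := by
    rw [hRverts, Set.ncard_union_eq (Set.disjoint_right.mpr ?_) hfin (Set.finite_range _),
      Set.ncard_range_of_injective (f := Fin.tail u) (hu.comp (Fin.succ_injective _)),
      Nat.card_fin]
    rintro _ ⟨k, rfl⟩
    exact hout k
  exact hcard ▸ hasDisjointPathCover_of_isPathSubgraph hR (hcard ▸ h4)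

lemma hasDisjointPathCover_of_disjoint_chain {n : ℕ} {P : G.Subgraph} (hP : IsPathSubgraph P)
    (h4 : 4 ≤ P.verts.ncard) {u : Fin (n + 4) → V} (hu : Function.Injective u)
    (hadj : ∀ k : Fin (n + 3), G.Adj (u k.castSucc) (u k.succ)) (hout : ∀ k, u k ∉ P.verts) :
    HasDisjointPathCover G (P.verts.ncard + (n + 4)) := by
  obtain ⟨R, hR, hRverts⟩ := exists_isPathSubgraph_verts_eq_range hu hadj
  have hcard : R.verts.ncard = n + 4 := by
    rw [hRverts, Set.ncard_range_of_injective hu, Nat.card_fin]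
  have hdisj : Disjoint P.verts R.verts := by
    rw [hRverts, Set.disjoint_right]
    rintro _ ⟨k, rfl⟩
    exact hout k
  exact hcard ▸ hasDisjointPathCover_of_disjoint hP hR h4 (by omega) hdisj

end Covers

namespace FivePathConfig

variable (cfg : FivePathConfig G) {i j : Fin 5}

lemma v_notMem_insert_U (hi : i ∈ cfg.A1 ∪ cfg.A2) (hj : j ≠ i) :
    cfg.v j ∉ insert (cfg.v i) (cfg.U i) := by
  rintro (h | h)
  · exact hj (cfg.inj h)
  · exact Set.disjoint_left.mp (cfg.hUv i hi) h ⟨j, rfl⟩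

lemma v_notMem_verts_P (hi : i ∈ cfg.A2) (hj : j ≠ i) : cfg.v j ∉ (cfg.P i).verts :=
  fun h => cfg.v_notMem_insert_U (Finset.mem_union_right _ hi) hj (cfg.hPverts i hi h)

lemma v_notMem_verts_Q (hi : i ∈ cfg.A1 ∪ cfg.A2) (hj : j ≠ i) : cfg.v j ∉ (cfg.Q i).verts :=
  fun h => cfg.v_notMem_insert_U hi hj (cfg.hQverts i hi h)

end FivePathConfig

end

theorem stmt16_general {V : Type*} (G : SimpleGraph V)
    (cfg : FivePathConfig G) (i : Fin 5)
    (h2 : cfg.A2 = {i}) :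
    ((i = 0 ∨ i = 4) → HasDisjointPathCover G 9) ∧
    ((i = 1 ∨ i = 3) → HasDisjointPathCover G 6) ∧
    (i = 2 → HasDisjointPathCover G 5) := by
  have hi : i ∈ cfg.A2 := h2 ▸ Finset.mem_singleton_self i
  have hiQ : i ∈ cfg.A1 ∪ cfg.A2 := Finset.mem_union_right _ hi
  have hP5 := cfg.hPcard i hi
  have hQ3 := cfg.hQcard i hiQ
  have hQfin : (cfg.Q i).verts.Finite := Set.finite_of_ncard_pos (by omega)
  refine ⟨?_, ?_, fun _ => (hasDisjointPathCover_of_isPathSubgraph (cfg.hPpath i hi)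
    (by omega)).mono hP5⟩
  · rintro (rfl | rfl)
    · exact (hasDisjointPathCover_of_disjoint_chain (n := 0) (cfg.hPpath 0 hi) (by omega)
        (u := cfg.v ∘ Fin.succ) (cfg.inj.comp (Fin.succ_injective _)) (fun k => cfg.adj k.succ)
        fun k => cfg.v_notMem_verts_P hi k.succ_ne_zero).mono (by omega)
    · exact (hasDisjointPathCover_of_disjoint_chain (n := 0) (cfg.hPpath 4 hi) (by omega)
        (u := cfg.v ∘ Fin.castSucc) (cfg.inj.comp (Fin.castSucc_injective _))
        (fun k => cfg.adj k.castSucc)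
        fun k => cfg.v_notMem_verts_P hi (Fin.castSucc_lt_last k).ne).mono (by omega)
  · rintro (rfl | rfl)
    · exact (hasDisjointPathCover_of_sup_chain (cfg.hQpath 1 hiQ) hQfin
        (u := cfg.v ∘ Fin.succ) (cfg.inj.comp (Fin.succ_injective _)) (fun k => cfg.adj k.succ)
        (cfg.hQend 1 hiQ)
        (fun k => cfg.v_notMem_verts_Q hiQ ((Fin.succ_injective _).ne k.succ_ne_zero))
        (by omega)).mono (by omega)
    · exact (hasDisjointPathCover_of_sup_chain (cfg.hQpath 3 hiQ) hQfin
        (u := cfg.v ∘ Fin.castSucc ∘ Fin.rev)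
        (cfg.inj.comp ((Fin.castSucc_injective _).comp Fin.rev_injective))
        (fun k => by fin_cases k; exacts [(cfg.adj 2).symm, (cfg.adj 1).symm, (cfg.adj 0).symm])
        (cfg.hQend 3 hiQ) (fun k => cfg.v_notMem_verts_Q hiQ (by fin_cases k <;> decide))
        (by omega)).mono (by omega)

/-- a 5-path-center configuration with `A2 = {i}` and `A1 = ∅` yields
vertex-disjoint `4⁺`-paths covering at least 9 vertices if `i ∈ {1,5}` (indices `0,4`),
at least 6 if `i ∈ {2,4}` (indices `1,3`), and at least 5 if `i = 3` (index `2`). -/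
theorem stmt16 {V : Type*} [Fintype V] [DecidableEq V] (G : SimpleGraph V)
    (cfg : FivePathConfig G) (i : Fin 5)
    (h2 : cfg.A2 = {i}) (h1 : cfg.A1 = ∅) :
    ((i = 0 ∨ i = 4) → HasDisjointPathCover G 9) ∧
    ((i = 1 ∨ i = 3) → HasDisjointPathCover G 6) ∧
    (i = 2 → HasDisjointPathCover G 5) :=
  stmt16_general G cfg i h2
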